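/- arXiv:1204.2435 — 2 statements merged into one kernel-verified Lean document; each statement's English description precedes it below -/
import Mathlib

section
/- For every z > 0, writing α = f(z) (so 0 < α < 1), one has f(z⁻¹) = 1 − α and (1−q)·h(1−α) − q(1−α)·log(z⁻¹) + q c Σ_{t∈I_c} γ_t log A_t(z⁻¹) = (1−q)·h(α) − qα·log z + q c Σ_{t∈I_c} γ_t log A_t(z). Consequently the spectral shape G(α) = (1−q)h(α) − qα log f⁻¹(α) + q c Σ_{t∈I_c} γ_t log A_t(f⁻¹(α)) satisfies G(1−α) = G(α) for all α ∈ (0,1). -/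
open Finset Filter Real Topology

/-- The local weight enumerating polynomial `A_t(z) = 1 + ∑_{u=r_t}^{s_t} a_{t,u} z^u`,
encoded with a full coefficient function `a` satisfying `a t 0 = 1`, `a t u = 0` for
`0 < u < r t` and for `u > s t`. -/
noncomputable def Afun {ι : Type*} (s : ι → ℕ) (a : ι → ℕ → ℝ) (t : ι) (z : ℝ) : ℝ :=
  ∑ u ∈ Finset.range (s t + 1), a t u * z ^ u

/-- The function `f(z) = c ⬝ ∑_{t ∈ I_c} γ_t z A_t′(z) / A_t(z)`. -/
noncomputable def ff {ι : Type*} [Fintype ι] (s : ι → ℕ) (a : ι → ℕ → ℝ)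
    (γ : ι → ℝ) (c : ℝ) (z : ℝ) : ℝ :=
  c * ∑ t, γ t * (z * deriv (Afun s a t) z) / Afun s a t z

/-- The binary entropy function (in nats). -/
noncomputable def hEnt (x : ℝ) : ℝ := -x * Real.log x - (1 - x) * Real.log (1 - x)

/-!
Each `A_t` is palindromic, `A_t(z) = z^{s_t} A_t(1/z)`. Hence `log A_t(1/z) = log A_t(z) - s_t log z`
and the Euler ratio `z A_t'(z) / A_t(z)` at `1/z` is `s_t` minus its value at `z`; with the
normalization `c ∑ γ_t s_t = 1` this gives `f(1/z) = 1 - f(z)`, and the `log z` terms of the two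
sides cancel while `h(1 - α) = h(α)`. The Euler ratio is the mean of the distribution
`u ↦ a_u z^u / A(z)`, which is strictly increasing in `z`, so `f` is injective on `(0, ∞)` and
`f⁻¹(1 - α) = 1 / f⁻¹(α)`.
-/

noncomputable def poly (n : ℕ) (b : ℕ → ℝ) (z : ℝ) : ℝ :=
  ∑ u ∈ range (n + 1), b u * z ^ u

noncomputable def thetaPoly (n : ℕ) (b : ℕ → ℝ) (z : ℝ) : ℝ :=
  ∑ u ∈ range (n + 1), (u : ℝ) * b u * z ^ u

section Poly

variable {n : ℕ} {b : ℕ → ℝ} {x y z : ℝ}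

theorem mul_deriv_poly : z * deriv (poly n b) z = thetaPoly n b z := by
  have h : HasDerivAt (poly n b) (∑ u ∈ range (n + 1), b u * (u * z ^ (u - 1))) z :=
    HasDerivAt.fun_sum fun u _ => (hasDerivAt_pow u z).const_mul (b u)
  rw [h.deriv, thetaPoly, mul_sum]
  refine sum_congr rfl fun u _ => ?_
  cases u with
  | zero => simp
  | succ v => rw [Nat.add_sub_cancel, pow_succ]; push_cast; ring

theorem inv_pow_mul_pow_of_le (hz : z ≠ 0) {u : ℕ} (hu : u ≤ n) :
    z⁻¹ ^ u * z ^ n = z ^ (n - u) := by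
  rw [pow_sub₀ z hz hu, inv_pow, mul_comm]

theorem poly_inv (hsym : ∀ u ≤ n, b u = b (n - u)) (hz : z ≠ 0) :
    poly n b z⁻¹ = poly n b z / z ^ n := by
  rw [eq_div_iff (pow_ne_zero n hz), poly, poly, sum_mul,
    ← sum_range_reflect (fun u => b u * z ^ u)]
  refine sum_congr rfl fun u hu => ?_
  have hu : u ≤ n := Nat.lt_succ_iff.mp (mem_range.mp hu)
  rw [Nat.add_sub_cancel, mul_assoc, inv_pow_mul_pow_of_le hz hu, hsym u hu]

theorem thetaPoly_inv (hsym : ∀ u ≤ n, b u = b (n - u)) (hz : z ≠ 0) :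
    thetaPoly n b z⁻¹ = (n * poly n b z - thetaPoly n b z) / z ^ n := by
  have hreflect : n * poly n b z - thetaPoly n b z =
      ∑ u ∈ range (n + 1), ((n - u : ℕ) : ℝ) * b u * z ^ u := by
    rw [poly, thetaPoly, mul_sum, ← sum_sub_distrib]
    refine sum_congr rfl fun u hu => ?_
    rw [Nat.cast_sub (Nat.lt_succ_iff.mp (mem_range.mp hu))]
    ring
  rw [hreflect, eq_div_iff (pow_ne_zero n hz), thetaPoly, sum_mul,
    ← sum_range_reflect (fun u => ((n - u : ℕ) : ℝ) * b u * z ^ u)]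
  refine sum_congr rfl fun u hu => ?_
  have hu : u ≤ n := Nat.lt_succ_iff.mp (mem_range.mp hu)
  rw [Nat.add_sub_cancel, Nat.sub_sub_self hu, mul_assoc, inv_pow_mul_pow_of_le hz hu, hsym u hu]

theorem thetaPoly_div_poly_inv (hsym : ∀ u ≤ n, b u = b (n - u)) (hz : z ≠ 0)
    (hP : poly n b z ≠ 0) :
    thetaPoly n b z⁻¹ / poly n b z⁻¹ = n - thetaPoly n b z / poly n b z := by
  rw [poly_inv hsym hz, thetaPoly_inv hsym hz, div_div_div_cancel_right₀ (pow_ne_zero n hz),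
    sub_div, mul_div_cancel_right₀ _ hP]

theorem log_poly_inv (hsym : ∀ u ≤ n, b u = b (n - u)) (hz : 0 < z) (hP : 0 < poly n b z) :
    log (poly n b z⁻¹) = log (poly n b z) - n * log z := by
  rw [poly_inv hsym hz.ne', log_div hP.ne' (pow_ne_zero n hz.ne'), log_pow]

theorem poly_pos (hnn : ∀ u, 0 ≤ b u) (hb0 : 0 < b 0) (hz : 0 < z) : 0 < poly n b z :=
  sum_pos' (fun u _ => mul_nonneg (hnn u) (pow_nonneg hz.le u)) ⟨0, by simp, by simpa using hb0⟩

theorem thetaPoly_pos (hnn : ∀ u, 0 ≤ b u) (hn : 0 < n) (hbn : 0 < b n) (hz : 0 < z) :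
    0 < thetaPoly n b z :=
  sum_pos' (fun u _ => mul_nonneg (mul_nonneg u.cast_nonneg (hnn u)) (pow_nonneg hz.le u))
    ⟨n, by simp, mul_pos (mul_pos (by exact_mod_cast hn) hbn) (pow_pos hz n)⟩

theorem thetaPoly_lt (hnn : ∀ u, 0 ≤ b u) (hn : 0 < n) (hb0 : 0 < b 0) (hz : 0 < z) :
    thetaPoly n b z < n * poly n b z := by
  rw [poly, mul_sum]
  refine sum_lt_sum (fun u hu => ?_) ⟨0, by simp, by simpa using mul_pos (by exact_mod_cast hn) hb0⟩
  have hu : (u : ℝ) ≤ n := by exact_mod_cast Nat.lt_succ_iff.mp (mem_range.mp hu)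
  rw [mul_assoc]
  exact mul_le_mul_of_nonneg_right hu (mul_nonneg (hnn u) (pow_nonneg hz.le u))

theorem thetaPoly_div_poly_mem_Ioo (hnn : ∀ u, 0 ≤ b u) (hn : 0 < n) (hb0 : 0 < b 0)
    (hbn : 0 < b n) (hz : 0 < z) : thetaPoly n b z / poly n b z ∈ Set.Ioo 0 (n : ℝ) :=
  have hP := poly_pos hnn hb0 hz
  ⟨div_pos (thetaPoly_pos hnn hn hbn hz) hP, (div_lt_iff₀ hP).2 (thetaPoly_lt hnn hn hb0 hz)⟩

theorem pow_mul_pow_le_pow_mul_pow {u v : ℕ} (huv : v ≤ u) (hx : 0 ≤ x) (hxy : x ≤ y) :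
    x ^ u * y ^ v ≤ y ^ u * x ^ v := by
  obtain ⟨k, rfl⟩ := Nat.exists_eq_add_of_le huv
  calc x ^ (v + k) * y ^ v = x ^ v * y ^ v * x ^ k := by ring
    _ ≤ x ^ v * y ^ v * y ^ k := mul_le_mul_of_nonneg_left (pow_le_pow_left₀ hx hxy k)
      (mul_nonneg (pow_nonneg hx v) (pow_nonneg (hx.trans hxy) v))
    _ = y ^ (v + k) * x ^ v := by ring

theorem sub_mul_sub_pow_nonneg (u v : ℕ) (hx : 0 ≤ x) (hxy : x ≤ y) :
    0 ≤ ((u : ℝ) - v) * (y ^ u * x ^ v - x ^ u * y ^ v) := by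
  rcases le_total v u with h | h
  · exact mul_nonneg (sub_nonneg.2 (by exact_mod_cast h))
      (sub_nonneg.2 (pow_mul_pow_le_pow_mul_pow h hx hxy))
  · have := pow_mul_pow_le_pow_mul_pow h hx hxy
    exact mul_nonneg_of_nonpos_of_nonpos (sub_nonpos.2 (by exact_mod_cast h))
      (sub_nonpos.2 (by linarith [mul_comm (x ^ v) (y ^ u), mul_comm (y ^ v) (x ^ u)]))

theorem thetaPoly_mul_poly_lt (hnn : ∀ u, 0 ≤ b u) (hn : 0 < n) (hb0 : 0 < b 0) (hbn : 0 < b n)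
    (hx : 0 < x) (hxy : x < y) :
    thetaPoly n b x * poly n b y < thetaPoly n b y * poly n b x := by
  set g : ℕ → ℕ → ℝ := fun u v => b u * b v * (((u : ℝ) - v) * (y ^ u * x ^ v - x ^ u * y ^ v))
  have hD : thetaPoly n b y * poly n b x - thetaPoly n b x * poly n b y =
      ∑ u ∈ range (n + 1), ∑ v ∈ range (n + 1), (u : ℝ) * b u * b v * (y ^ u * x ^ v - x ^ u * y ^ v) := by
    simp only [thetaPoly, poly, sum_mul_sum, ← sum_sub_distrib]
    refine sum_congr rfl fun u _ => sum_congr rfl fun v _ => ?_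
    ring
  -- symmetrize the double sum in `u ↔ v`
  have h2D : 2 * (thetaPoly n b y * poly n b x - thetaPoly n b x * poly n b y) =
      ∑ u ∈ range (n + 1), ∑ v ∈ range (n + 1), g u v := by
    rw [two_mul, hD]
    nth_rewrite 2 [sum_comm]
    rw [← sum_add_distrib]
    refine sum_congr rfl fun u _ => ?_
    rw [← sum_add_distrib]
    refine sum_congr rfl fun v _ => ?_
    ring
  have hg : ∀ u v, 0 ≤ g u v := fun u v =>
    mul_nonneg (mul_nonneg (hnn u) (hnn v)) (sub_mul_sub_pow_nonneg u v hx.le hxy.le)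
  have hgn0 : 0 < g n 0 := by
    simp only [g, Nat.cast_zero, sub_zero, pow_zero, mul_one]
    exact mul_pos (mul_pos hbn hb0)
      (mul_pos (by exact_mod_cast hn) (sub_pos.2 (pow_lt_pow_left₀ hxy hx.le hn.ne')))
  have hpos : 0 < ∑ u ∈ range (n + 1), ∑ v ∈ range (n + 1), g u v :=
    sum_pos' (fun u _ => sum_nonneg fun v _ => hg u v)
      ⟨n, by simp, sum_pos' (fun v _ => hg n v) ⟨0, by simp, hgn0⟩⟩
  linarith

theorem strictMonoOn_thetaPoly_div_poly (hnn : ∀ u, 0 ≤ b u) (hn : 0 < n) (hb0 : 0 < b 0)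
    (hbn : 0 < b n) : StrictMonoOn (fun z => thetaPoly n b z / poly n b z) (Set.Ioi 0) :=
  fun _ hx _ _ hxy => (div_lt_div_iff₀ (poly_pos hnn hb0 hx) (poly_pos hnn hb0 (hx.trans hxy))).2
    (thetaPoly_mul_poly_lt hnn hn hb0 hbn hx hxy)

end Poly

theorem hEnt_one_sub (x : ℝ) : hEnt (1 - x) = hEnt x := by
  rw [hEnt, hEnt, sub_sub_cancel]
  ring

theorem Afun_eq_poly {ι : Type*} (s : ι → ℕ) (a : ι → ℕ → ℝ) (t : ι) (z : ℝ) :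
    Afun s a t z = poly (s t) (a t) z := rfl

section Spectral

variable {ι : Type*} [Fintype ι] {s : ι → ℕ} {a : ι → ℕ → ℝ} {γ : ι → ℝ} {c z : ℝ}

theorem ff_eq_sum :
    ff s a γ c z = c * ∑ t, γ t * (thetaPoly (s t) (a t) z / poly (s t) (a t) z) := by
  refine congrArg (c * ·) (sum_congr rfl fun t _ => ?_)
  rw [mul_div_assoc, ← mul_deriv_poly]
  rfl

theorem ff_inv (hsym : ∀ t, ∀ u ≤ s t, a t u = a t (s t - u)) (hz : z ≠ 0)
    (hA : ∀ t, poly (s t) (a t) z ≠ 0) :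
    ff s a γ c z⁻¹ = c * ∑ t, γ t * s t - ff s a γ c z := by
  simp only [ff_eq_sum, thetaPoly_div_poly_inv (hsym _) hz (hA _), mul_sub, sum_sub_distrib]

theorem sum_mul_log_Afun_inv (hsym : ∀ t, ∀ u ≤ s t, a t u = a t (s t - u)) (hz : 0 < z)
    (hA : ∀ t, 0 < poly (s t) (a t) z) :
    ∑ t, γ t * log (Afun s a t z⁻¹) =
      ∑ t, γ t * log (Afun s a t z) - (∑ t, γ t * s t) * log z := by
  simp only [Afun_eq_poly, log_poly_inv (hsym _) hz (hA _), mul_sub, sum_sub_distrib, sum_mul,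
    mul_assoc]

theorem ff_pos_and_lt [Nonempty ι] (hc : 0 < c) (hγ : ∀ t, 0 < γ t) (hs : ∀ t, 0 < s t)
    (hnn : ∀ t u, 0 ≤ a t u) (ha0 : ∀ t, 0 < a t 0) (has : ∀ t, 0 < a t (s t)) (hz : 0 < z) :
    0 < ff s a γ c z ∧ ff s a γ c z < c * ∑ t, γ t * s t := by
  have hρ t := thetaPoly_div_poly_mem_Ioo (hnn t) (hs t) (ha0 t) (has t) hz
  rw [ff_eq_sum]
  exact ⟨mul_pos hc (sum_pos (fun t _ => mul_pos (hγ t) (hρ t).1) univ_nonempty),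
    mul_lt_mul_of_pos_left (sum_lt_sum_of_nonempty univ_nonempty fun t _ =>
      mul_lt_mul_of_pos_left (hρ t).2 (hγ t)) hc⟩

theorem strictMonoOn_ff [Nonempty ι] (hc : 0 < c) (hγ : ∀ t, 0 < γ t) (hs : ∀ t, 0 < s t)
    (hnn : ∀ t u, 0 ≤ a t u) (ha0 : ∀ t, 0 < a t 0) (has : ∀ t, 0 < a t (s t)) :
    StrictMonoOn (ff s a γ c) (Set.Ioi 0) := fun x hx y hy hxy => by
  simp only [ff_eq_sum]
  exact mul_lt_mul_of_pos_left (sum_lt_sum_of_nonempty univ_nonempty fun t _ =>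
    mul_lt_mul_of_pos_left (strictMonoOn_thetaPoly_div_poly (hnn t) (hs t) (ha0 t) (has t)
      hx hy hxy) (hγ t)) hc

end Spectral

theorem stmt_8_general {ι : Type*} [Fintype ι] [Nonempty ι]
    (q : ℕ)
    (r s : ι → ℕ) (h2r : ∀ t, 2 ≤ r t) (hrs : ∀ t, r t ≤ s t)
    (a : ι → ℕ → ℝ)
    (ha0 : ∀ t, a t 0 = 1)
    (hnn : ∀ t u, 0 ≤ a t u)
    (hsym : ∀ t, ∀ u ≤ s t, a t u = a t (s t - u))
    (γ : ι → ℝ) (hγ : ∀ t, 0 < γ t) (c : ℝ) (hc : 0 < c)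
    (hnorm : c * ∑ t, γ t * (s t : ℝ) = 1) :
    (∀ z : ℝ, 0 < z →
      (0 < ff s a γ c z ∧ ff s a γ c z < 1) ∧
      ff s a γ c z⁻¹ = 1 - ff s a γ c z ∧
      ((1 - (q : ℝ)) * hEnt (1 - ff s a γ c z)
          - (q : ℝ) * (1 - ff s a γ c z) * Real.log z⁻¹
          + (q : ℝ) * c * ∑ t, γ t * Real.log (Afun s a t z⁻¹)
        = (1 - (q : ℝ)) * hEnt (ff s a γ c z)
          - (q : ℝ) * ff s a γ c z * Real.log z
          + (q : ℝ) * c * ∑ t, γ t * Real.log (Afun s a t z))) ∧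
    (∀ finv : ℝ → ℝ,
      (∀ α ∈ Set.Ioo (0 : ℝ) 1, 0 < finv α ∧ ff s a γ c (finv α) = α) →
      ∀ α ∈ Set.Ioo (0 : ℝ) 1,
        (1 - (q : ℝ)) * hEnt (1 - α) - (q : ℝ) * (1 - α) * Real.log (finv (1 - α))
            + (q : ℝ) * c * ∑ t, γ t * Real.log (Afun s a t (finv (1 - α)))
          = (1 - (q : ℝ)) * hEnt α - (q : ℝ) * α * Real.log (finv α)
            + (q : ℝ) * c * ∑ t, γ t * Real.log (Afun s a t (finv α))) := by
  
  have hs : ∀ t, 0 < s t := fun t => by linarith [h2r t, hrs t]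
  have has : ∀ t, a t (s t) = 1 := fun t => by simpa [ha0] using (hsym t 0 (Nat.zero_le _)).symm
  have ha0' : ∀ t, 0 < a t 0 := fun t => by simp [ha0]
  have has' : ∀ t, 0 < a t (s t) := fun t => by simp [has]
  have hA : ∀ z, 0 < z → ∀ t, 0 < poly (s t) (a t) z := fun z hz t =>
    poly_pos (hnn t) (ha0' t) hz
  have key : ∀ z : ℝ, 0 < z →
      (0 < ff s a γ c z ∧ ff s a γ c z < 1) ∧ ff s a γ c z⁻¹ = 1 - ff s a γ c z ∧
      ((1 - (q : ℝ)) * hEnt (1 - ff s a γ c z)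
          - (q : ℝ) * (1 - ff s a γ c z) * Real.log z⁻¹
          + (q : ℝ) * c * ∑ t, γ t * Real.log (Afun s a t z⁻¹)
        = (1 - (q : ℝ)) * hEnt (ff s a γ c z)
          - (q : ℝ) * ff s a γ c z * Real.log z
          + (q : ℝ) * c * ∑ t, γ t * Real.log (Afun s a t z)) := fun z hz => by
    refine ⟨hnorm ▸ ff_pos_and_lt hc hγ hs hnn ha0' has' hz,
      hnorm ▸ ff_inv hsym hz.ne' fun t => (hA z hz t).ne', ?_⟩
    rw [hEnt_one_sub, log_inv, sum_mul_log_Afun_inv hsym hz (hA z hz)]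
    linear_combination (-(q : ℝ) * log z) * hnorm
  refine ⟨key, fun finv hfinv α hα => ?_⟩
  obtain ⟨hz, hfz⟩ := hfinv (1 - α) ⟨by linarith [hα.2], by linarith [hα.1]⟩
  obtain ⟨hw, hfw⟩ := hfinv α hα
  obtain ⟨-, hinv, hG⟩ := key _ hz
  have hfinv_one_sub : finv α = (finv (1 - α))⁻¹ :=
    (strictMonoOn_ff hc hγ hs hnn ha0' has').injOn hw (inv_pos.2 hz)
      (by rw [hfw, hinv, hfz, sub_sub_cancel])
  rw [hfz, sub_sub_cancel] at hG
  rw [hfinv_one_sub]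
  exact hG.symm

/-- under the normalization `c ⬝ ∑_t γ_t s_t = 1` and symmetric coefficients
(so `M = 1`): for every `z > 0`, writing `α = f(z)` one has `0 < α < 1`, `f(z⁻¹) = 1 − α`, and
`(1−q)h(1−α) − q(1−α)log z⁻¹ + qc ∑_t γ_t log A_t(z⁻¹)
  = (1−q)h(α) − qα log z + qc ∑_t γ_t log A_t(z)`.
Consequently the spectral shape `G(α) = (1−q)h(α) − qα log f⁻¹(α) + qc ∑_t γ_t log A_t(f⁻¹(α))`
satisfies `G(1−α) = G(α)` for all `α ∈ (0,1)`. -/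
theorem stmt_8 {ι : Type*} [Fintype ι] [Nonempty ι]
    (q : ℕ) (hq : 2 ≤ q)
    (r s : ι → ℕ) (h2r : ∀ t, 2 ≤ r t) (hrs : ∀ t, r t ≤ s t)
    (a : ι → ℕ → ℝ)
    (ha0 : ∀ t, a t 0 = 1)
    (hmid : ∀ t u, 0 < u → u < r t → a t u = 0)
    (hhigh : ∀ t u, s t < u → a t u = 0)
    (hnn : ∀ t u, 0 ≤ a t u)
    (har : ∀ t, 0 < a t (r t))
    (hsym : ∀ t, ∀ u ≤ s t, a t u = a t (s t - u))
    (γ : ι → ℝ) (hγ : ∀ t, 0 < γ t) (c : ℝ) (hc : 0 < c)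
    (hnorm : c * ∑ t, γ t * (s t : ℝ) = 1) :
    (∀ z : ℝ, 0 < z →
      (0 < ff s a γ c z ∧ ff s a γ c z < 1) ∧
      ff s a γ c z⁻¹ = 1 - ff s a γ c z ∧
      ((1 - (q : ℝ)) * hEnt (1 - ff s a γ c z)
          - (q : ℝ) * (1 - ff s a γ c z) * Real.log z⁻¹
          + (q : ℝ) * c * ∑ t, γ t * Real.log (Afun s a t z⁻¹)
        = (1 - (q : ℝ)) * hEnt (ff s a γ c z)
          - (q : ℝ) * ff s a γ c z * Real.log z
          + (q : ℝ) * c * ∑ t, γ t * Real.log (Afun s a t z))) ∧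
    (∀ finv : ℝ → ℝ,
      (∀ α ∈ Set.Ioo (0 : ℝ) 1, 0 < finv α ∧ ff s a γ c (finv α) = α) →
      ∀ α ∈ Set.Ioo (0 : ℝ) 1,
        (1 - (q : ℝ)) * hEnt (1 - α) - (q : ℝ) * (1 - α) * Real.log (finv (1 - α))
            + (q : ℝ) * c * ∑ t, γ t * Real.log (Afun s a t (finv (1 - α)))
          = (1 - (q : ℝ)) * hEnt α - (q : ℝ) * α * Real.log (finv α)
            + (q : ℝ) * c * ∑ t, γ t * Real.log (Afun s a t (finv α))) :=
  stmt_8_general q r s h2r hrs a ha0 hnn hsym γ hγ c hc hnorm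
end

section
/- Suppose ε₀ > 0 and z₀, y₀, β : (0, ε₀) → (0,∞) are functions such that, for every α ∈ (0, ε₀), z₀(α) (∫ρ/∫λ) Σ_{t∈I_c} γ_t A_t′(z₀(α))/A_t(z₀(α)) = β(α) and (β(α)∫λ)(1 + y₀(α)z₀(α)) = y₀(α)z₀(α), and assume β(α) → 0 as α → 0⁺. Then y₀(α) / (C^{1/r} · (β(α) ∫λ)^{(r−1)/r}) → 1 as α → 0⁺. -/
/-!
Write `b = β ∫λ` and `F(z) = ∑_t (ρ_t/s_t) z A_t'(z)/A_t(z)`, so that (E1) reads `b = F(z₀)`.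
Every `A_t - 1` has only terms of degree `≥ r`, so `F(z) = z^r g(z)` with `g` continuous and
`g(0) = C`; and `F` is bounded below by a positive constant on every `[δ, ∞)`. Hence `b → 0`
forces `z₀ → 0⁺` and `b ~ C z₀^r`. Since (E4) gives `y₀ = b / (z₀ (1 - b))`,
`y₀ / (C^{1/r} b^{(r-1)/r}) = (b / (C z₀^r))^{1/r} / (1 - b) → 1`.
-/

open Finset Filter Real Topology

/-- The CN weight enumerating polynomial `A_t(z) = 1 + ∑_{u=r_t}^{s_t} a_{t,u} z^u`. -/
noncomputable def AIcc {ι : Type*} (r s : ι → ℕ) (a : ι → ℕ → ℝ) (t : ι) (z : ℝ) : ℝ :=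
  1 + ∑ u ∈ Finset.Icc (r t) (s t), a t u * z ^ u

/-- `∫ρ = ∑_t ρ_t/s_t`. -/
noncomputable def intden {ι : Type*} [Fintype ι] (w : ι → ℝ) (n : ι → ℕ) : ℝ :=
  ∑ t, w t / n t

/-- `γ_t = ρ_t/(s_t ∫ρ)`. -/
noncomputable def nodefrac {ι : Type*} [Fintype ι] (w : ι → ℝ) (n : ι → ℕ) (t : ι) : ℝ :=
  w t / (n t * intden w n)

/-- `C = r ∑_{t : r_t = r} ρ_t a_{t,r} / s_t`, where `r = min_t r_t`. -/
noncomputable def Cdef {ι : Type*} [Fintype ι] (rc sc : ι → ℕ) (a : ι → ℕ → ℝ)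
    (ρ : ι → ℝ) (rmin : ℕ) : ℝ :=
  rmin * ∑ t ∈ Finset.univ.filter (fun t => rc t = rmin), ρ t * a t rmin / sc t

section AIcc

variable {ι : Type*} (r s : ι → ℕ) (a : ι → ℕ → ℝ) (t : ι)

noncomputable def AIccEuler (z : ℝ) : ℝ :=
  ∑ u ∈ Icc (r t) (s t), (u : ℝ) * a t u * z ^ u

theorem mul_deriv_AIcc (z : ℝ) : z * deriv (AIcc r s a t) z = AIccEuler r s a t z := by
  have hA : HasDerivAt (AIcc r s a t) (∑ u ∈ Icc (r t) (s t), a t u * (u * z ^ (u - 1))) z :=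
    (HasDerivAt.fun_sum fun u _ => (hasDerivAt_pow u z).const_mul (a t u)).const_add 1
  rw [hA.deriv, mul_sum]
  refine sum_congr rfl fun u _ => ?_
  rcases u with _ | u
  · simp
  · simp only [Nat.cast_add, Nat.cast_one, Nat.add_sub_cancel, pow_succ]
    ring

theorem continuous_AIcc : Continuous (AIcc r s a t) := by
  unfold AIcc
  fun_prop

theorem AIcc_zero (hr : 0 < r t) : AIcc r s a t 0 = 1 := by
  rw [AIcc, sum_eq_zero fun u hu => by rw [zero_pow (by grind), mul_zero], add_zero]

variable {r s a t}

theorem one_le_AIcc (ha : ∀ u, 0 ≤ a t u) {z : ℝ} (hz : 0 ≤ z) : 1 ≤ AIcc r s a t z :=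
  le_add_of_nonneg_right <| sum_nonneg fun u _ => by have := ha u; positivity

theorem AIcc_mono (ha : ∀ u, 0 ≤ a t u) : MonotoneOn (AIcc r s a t) (Set.Ici 0) := by
  intro x hx y _ hxy
  rw [Set.mem_Ici] at hx
  unfold AIcc
  gcongr with u
  exact ha u

theorem one_lt_AIcc (ha : ∀ u, 0 ≤ a t u) (hrs : r t ≤ s t) (har : 0 < a t (r t))
    {z : ℝ} (hz : 0 < z) : 1 < AIcc r s a t z := by
  have hlead : a t (r t) * z ^ r t ≤ ∑ u ∈ Icc (r t) (s t), a t u * z ^ u :=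
    single_le_sum (f := fun u => a t u * z ^ u) (fun u _ => by have := ha u; positivity)
      (mem_Icc.mpr ⟨le_rfl, hrs⟩)
  have : 0 < a t (r t) * z ^ r t := by positivity
  rw [AIcc]
  linarith

theorem AIccEuler_nonneg (ha : ∀ u, 0 ≤ a t u) {z : ℝ} (hz : 0 ≤ z) :
    0 ≤ AIccEuler r s a t z :=
  sum_nonneg fun u _ => by have := ha u; positivity

theorem AIcc_sub_one_le_AIccEuler (ha : ∀ u, 0 ≤ a t u) (hr : 0 < r t) {z : ℝ} (hz : 0 ≤ z) :
    AIcc r s a t z - 1 ≤ AIccEuler r s a t z := by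
  rw [AIcc, add_sub_cancel_left]
  refine sum_le_sum fun u hu => ?_
  have hu : (1 : ℝ) ≤ u := by exact_mod_cast hr.trans_le (mem_Icc.mp hu).1
  rw [mul_assoc]
  exact le_mul_of_one_le_left (by have := ha u; positivity) hu

theorem AIccEuler_eq_pow_mul {m : ℕ} (hm : m ≤ r t) (z : ℝ) :
    AIccEuler r s a t z = z ^ m * ∑ u ∈ Icc (r t) (s t), (u : ℝ) * a t u * z ^ (u - m) := by
  rw [AIccEuler, mul_sum]
  refine sum_congr rfl fun u hu => ?_
  rw [mul_left_comm, ← pow_add, Nat.add_sub_cancel' (hm.trans (mem_Icc.mp hu).1)]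

end AIcc

theorem sum_Icc_mul_zero_pow_sub {R : Type*} [Semiring R] (f : ℕ → R) {m p q : ℕ}
    (hmp : m ≤ p) (hpq : p ≤ q) :
    ∑ u ∈ Icc p q, f u * 0 ^ (u - m) = if p = m then f m else 0 := by
  have hterm : ∀ u ∈ Icc p q, f u * 0 ^ (u - m) = if m = u then f m else 0 := by
    intro u hu
    rcases eq_or_ne m u with rfl | hne
    · simp
    · rw [if_neg hne, zero_pow (by grind), mul_zero]
  rw [sum_congr rfl hterm, sum_ite_eq]
  grind

section EulerLogDerivSum

variable {ι : Type*} [Fintype ι] (r s : ι → ℕ) (a : ι → ℕ → ℝ) (ρ : ι → ℝ)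

/-- The function `F` with `β ∫λ = F(z₀)` in (E1). -/
noncomputable def eulerLogDerivSum (z : ℝ) : ℝ :=
  ∑ t, ρ t / s t * (AIccEuler r s a t z / AIcc r s a t z)

theorem intden_mul_nodefrac (hI : intden ρ s ≠ 0) (t : ι) :
    intden ρ s * nodefrac ρ s t = ρ t / s t := by
  unfold nodefrac
  field_simp

theorem mul_intden_mul_sum_nodefrac (hI : intden ρ s ≠ 0) (z : ℝ) :
    z * (intden ρ s * ∑ t, nodefrac ρ s t * deriv (AIcc r s a t) z / AIcc r s a t z) =
      eulerLogDerivSum r s a ρ z := by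
  rw [mul_sum, mul_sum, eulerLogDerivSum]
  refine sum_congr rfl fun t _ => ?_
  rw [← mul_deriv_AIcc, ← intden_mul_nodefrac s ρ hI t]
  ring

variable {r s a ρ}

theorem exists_pos_le_eulerLogDerivSum (hρ : ∀ t, 0 ≤ ρ t) (ha : ∀ t u, 0 ≤ a t u) {t₀ : ι}
    (hr : 0 < r t₀) (hrs : r t₀ ≤ s t₀) (har : 0 < a t₀ (r t₀)) (hρ₀ : 0 < ρ t₀)
    {δ : ℝ} (hδ : 0 < δ) : ∃ c > 0, ∀ z, δ ≤ z → c ≤ eulerLogDerivSum r s a ρ z := by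
  have hs : (0 : ℝ) < s t₀ := by exact_mod_cast hr.trans_le hrs
  have hAδ := one_lt_AIcc (ha t₀) hrs har hδ
  refine ⟨ρ t₀ / s t₀ * (1 - (AIcc r s a t₀ δ)⁻¹),
    mul_pos (div_pos hρ₀ hs) (sub_pos.mpr (inv_lt_one_of_one_lt₀ hAδ)), fun z hz => ?_⟩
  have hz0 : 0 ≤ z := hδ.le.trans hz
  have hA : 0 < AIcc r s a t₀ z := one_pos.trans_le (one_le_AIcc (ha t₀) hz0)
  have hterm : 1 - (AIcc r s a t₀ δ)⁻¹ ≤ AIccEuler r s a t₀ z / AIcc r s a t₀ z :=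
    calc 1 - (AIcc r s a t₀ δ)⁻¹ ≤ 1 - (AIcc r s a t₀ z)⁻¹ :=
          sub_le_sub_left (inv_anti₀ (one_pos.trans hAδ)
            (AIcc_mono (ha t₀) (Set.mem_Ici.mpr hδ.le) (Set.mem_Ici.mpr hz0) hz)) 1
      _ = (AIcc r s a t₀ z - 1) / AIcc r s a t₀ z := by field_simp
      _ ≤ AIccEuler r s a t₀ z / AIcc r s a t₀ z :=
          div_le_div_of_nonneg_right (AIcc_sub_one_le_AIccEuler (ha t₀) hr hz0) hA.le
  calc ρ t₀ / s t₀ * (1 - (AIcc r s a t₀ δ)⁻¹)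
      ≤ ρ t₀ / s t₀ * (AIccEuler r s a t₀ z / AIcc r s a t₀ z) :=
        mul_le_mul_of_nonneg_left hterm (div_pos hρ₀ hs).le
    _ ≤ eulerLogDerivSum r s a ρ z :=
        single_le_sum (f := fun t => ρ t / s t * (AIccEuler r s a t z / AIcc r s a t z))
          (fun t _ => mul_nonneg (div_nonneg (hρ t) (Nat.cast_nonneg _))
            (div_nonneg (AIccEuler_nonneg (ha t) hz0) (zero_le_one.trans (one_le_AIcc (ha t) hz0))))
          (mem_univ t₀)

theorem tendsto_eulerLogDerivSum_div_pow {m : ℕ} (hm : 0 < m) (hle : ∀ t, m ≤ r t)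
    (hrs : ∀ t, r t ≤ s t) :
    Tendsto (fun z => eulerLogDerivSum r s a ρ z / z ^ m) (𝓝[>] 0) (𝓝 (Cdef r s a ρ m)) := by
  set g : ℝ → ℝ := fun z => ∑ t, ρ t / s t *
    ((∑ u ∈ Icc (r t) (s t), (u : ℝ) * a t u * z ^ (u - m)) / AIcc r s a t z)
  have hA0 : ∀ t, AIcc r s a t 0 = 1 := fun t => AIcc_zero r s a t (hm.trans_le (hle t))
  have hg : ContinuousAt g 0 :=
    tendsto_finsetSum _ fun t _ => continuousAt_const.mul <|
      (by fun_prop : Continuous fun z : ℝ => ∑ u ∈ Icc (r t) (s t), (u : ℝ) * a t u * z ^ (u - m))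
        |>.continuousAt.div (continuous_AIcc r s a t).continuousAt (by rw [hA0]; exact one_ne_zero)
  have hg0 : g 0 = Cdef r s a ρ m := by
    simp only [g, hA0, div_one, Cdef]
    rw [mul_sum, sum_filter]
    refine sum_congr rfl fun t _ => ?_
    rw [sum_Icc_mul_zero_pow_sub _ (hle t) (hrs t)]
    split_ifs with h
    · subst h; ring
    · simp
  refine (hg0 ▸ hg.tendsto.mono_left nhdsWithin_le_nhds).congr'
    (eventually_nhdsWithin_of_forall fun z hz => ?_)
  simp only [g, eulerLogDerivSum]
  rw [sum_div]
  refine sum_congr rfl fun t _ => ?_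
  rw [AIccEuler_eq_pow_mul (hle t)]
  field_simp [pow_ne_zero m (Set.mem_Ioi.mp hz).ne']

theorem Cdef_pos {m : ℕ} (hm : 0 < m) (hρ : ∀ t, 0 < ρ t) (hs : ∀ t, 0 < s t)
    (har : ∀ t, 0 < a t (r t)) {t₀ : ι} (ht₀ : r t₀ = m) : 0 < Cdef r s a ρ m := by
  refine mul_pos (Nat.cast_pos.mpr hm) (sum_pos (fun t ht => ?_) ⟨t₀, by simp [ht₀]⟩)
  have hrt : r t = m := (mem_filter.mp ht).2
  exact div_pos (mul_pos (hρ t) (hrt ▸ har t)) (Nat.cast_pos.mpr (hs t))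

end EulerLogDerivSum

section Asymptotics

variable {α : Type*} {l : Filter α}

theorem tendsto_nhdsGT_zero_of_tendsto_comp {f : ℝ → ℝ}
    (hf : ∀ δ > 0, ∃ c > 0, ∀ x, δ ≤ x → c ≤ f x) {z : α → ℝ} (hz : ∀ᶠ i in l, 0 < z i)
    (hfz : Tendsto (fun i => f (z i)) l (𝓝 0)) : Tendsto z l (𝓝[>] 0) := by
  refine tendsto_nhdsWithin_iff.mpr
    ⟨tendsto_order.mpr ⟨fun b hb => hz.mono fun i hi => hb.trans hi, fun δ hδ => ?_⟩, hz⟩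
  obtain ⟨c, hc, hfc⟩ := hf δ hδ
  filter_upwards [hfz.eventually (gt_mem_nhds hc)] with i hi
  by_contra! h
  exact (hfc _ h).not_gt hi

theorem div_rpow_eq_of_mul_one_sub_eq {b y z C : ℝ} {r : ℕ} (hb : 0 < b) (hz : 0 < z)
    (hC : 0 < C) (hr : r ≠ 0) (hyz : y * z * (1 - b) = b) :
    y / (C ^ ((1 : ℝ) / r) * b ^ (((r : ℝ) - 1) / r)) =
      (b / z ^ r / C) ^ ((1 : ℝ) / r) / (1 - b) := by
  have h1b : 1 - b ≠ 0 := by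
    rintro h
    rw [h, mul_zero] at hyz
    exact hb.ne hyz
  have hr' : (r : ℝ) ≠ 0 := Nat.cast_ne_zero.mpr hr
  have hsplit : b ^ ((1 : ℝ) / r) * b ^ (((r : ℝ) - 1) / r) = b := by
    rw [← rpow_add hb, show (1 : ℝ) / r + ((r : ℝ) - 1) / r = 1 by field_simp; ring, rpow_one]
  have hzr : (z ^ r) ^ ((1 : ℝ) / r) = z := by
    rw [← rpow_natCast, ← rpow_mul hz.le, mul_one_div_cancel hr', rpow_one]
  have hy : y = b / (z * (1 - b)) := by
    field_simp
    linear_combination hyz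
  rw [div_div, div_rpow hb.le (by positivity), mul_rpow (by positivity) hC.le, hzr, hy]
  nth_rw 1 [← hsplit]
  field_simp

theorem tendsto_div_rpow_of_eq_comp {f : ℝ → ℝ} {C : ℝ} {r : ℕ} (hC : 0 < C) (hr : r ≠ 0)
    (hf0 : Tendsto (fun x => f x / x ^ r) (𝓝[>] 0) (𝓝 C))
    (hf : ∀ δ > 0, ∃ c > 0, ∀ x, δ ≤ x → c ≤ f x)
    {b y z : α → ℝ} (hz : ∀ᶠ i in l, 0 < z i) (hbf : ∀ᶠ i in l, b i = f (z i))
    (hb : Tendsto b l (𝓝 0)) (hy : ∀ᶠ i in l, b i * (1 + y i * z i) = y i * z i) :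
    Tendsto (fun i => y i / (C ^ ((1 : ℝ) / r) * b i ^ (((r : ℝ) - 1) / r))) l (𝓝 1) := by
  have hz0 : Tendsto z l (𝓝[>] 0) := tendsto_nhdsGT_zero_of_tendsto_comp hf hz (hb.congr' hbf)
  have hlim : Tendsto (fun i => (f (z i) / z i ^ r / C) ^ ((1 : ℝ) / r) / (1 - b i)) l (𝓝 1) := by
    have hratio := (hf0.comp hz0).div_const C
    rw [div_self hC.ne'] at hratio
    simpa [Pi.div_def] using (hratio.rpow_const (Or.inl one_ne_zero)).div
      ((tendsto_const_nhds (x := (1 : ℝ))).sub hb) (by norm_num)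
  refine hlim.congr' ?_
  filter_upwards [hz, hbf, hy] with i hzi hbi hyi
  obtain ⟨c, hc, hfc⟩ := hf (z i) hzi
  have hbi_pos : 0 < b i := hbi ▸ hc.trans_le (hfc _ le_rfl)
  rw [← hbi]
  exact (div_rpow_eq_of_mul_one_sub_eq hbi_pos hzi hC hr (by linear_combination -hyi)).symm

end Asymptotics

theorem stmt_17_general {ι : Type*} [Fintype ι]
    (rc sc : ι → ℕ) (h2r : ∀ t, 2 ≤ rc t) (hrs : ∀ t, rc t ≤ sc t)
    (a : ι → ℕ → ℝ) (hann : ∀ t u, 0 ≤ a t u) (har : ∀ t, 0 < a t (rc t))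
    (ρ : ι → ℝ) (hρ : ∀ t, 0 < ρ t)
    (intL : ℝ) (hintL : 0 < intL)
    (rmin : ℕ) (hrle : ∀ t, rmin ≤ rc t) (hrex : ∃ t, rc t = rmin)
    (ε₀ : ℝ) (hε₀ : 0 < ε₀)
    (z₀ y₀ β : ℝ → ℝ)
    (hpos : ∀ α ∈ Set.Ioo 0 ε₀, 0 < z₀ α ∧ 0 < y₀ α ∧ 0 < β α)
    (hE1 : ∀ α ∈ Set.Ioo 0 ε₀,
      z₀ α * ((intden ρ sc / intL) *
        ∑ t, nodefrac ρ sc t * deriv (AIcc rc sc a t) (z₀ α) / AIcc rc sc a t (z₀ α)) = β α)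
    (hE4 : ∀ α ∈ Set.Ioo 0 ε₀,
      (β α * intL) * (1 + y₀ α * z₀ α) = y₀ α * z₀ α)
    (hβ0 : Filter.Tendsto β (nhdsWithin 0 (Set.Ioi 0)) (𝓝 0)) :
    Filter.Tendsto
      (fun α => y₀ α /
        (Cdef rc sc a ρ rmin ^ ((1 : ℝ) / rmin) *
          (β α * intL) ^ (((rmin : ℝ) - 1) / rmin)))
      (nhdsWithin 0 (Set.Ioi 0)) (𝓝 1) := by
  obtain ⟨t₀, ht₀⟩ := hrex
  have hr : ∀ t, 0 < rc t := fun t => by have := h2r t; omega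
  have hs : ∀ t, 0 < sc t := fun t => (hr t).trans_le (hrs t)
  have hI : intden ρ sc ≠ 0 :=
    (sum_pos (fun t _ => div_pos (hρ t) (Nat.cast_pos.mpr (hs t))) ⟨t₀, mem_univ _⟩).ne'
  have hIoo : Set.Ioo 0 ε₀ ∈ 𝓝[>] (0 : ℝ) := Ioo_mem_nhdsGT hε₀
  refine tendsto_div_rpow_of_eq_comp (f := eulerLogDerivSum rc sc a ρ)
    (Cdef_pos (ht₀ ▸ hr t₀) hρ hs har ht₀) (ht₀ ▸ hr t₀).ne'
    (tendsto_eulerLogDerivSum_div_pow (ht₀ ▸ hr t₀) hrle hrs)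
    (fun δ hδ => exists_pos_le_eulerLogDerivSum (fun t => (hρ t).le) hann (hr t₀) (hrs t₀)
      (har t₀) (hρ t₀) hδ)
    (eventually_of_mem hIoo fun α hα => (hpos α hα).1) (eventually_of_mem hIoo fun α hα => ?_)
    (by simpa using hβ0.mul_const intL) (eventually_of_mem hIoo hE4)
  rw [← mul_intden_mul_sum_nodefrac rc sc a ρ hI, ← hE1 α hα]
  field_simp

/-- if positive functions `z₀, y₀, β` on `(0,ε₀)` satisfy (E1) and (E4) and
`β(α) → 0` as `α → 0⁺`, then `y₀(α)/(C^{1/r} (β(α)∫λ)^{(r−1)/r}) → 1` as `α → 0⁺`. -/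
theorem stmt_17 {ι : Type*} [Fintype ι] [Nonempty ι]
    (rc sc : ι → ℕ) (h2r : ∀ t, 2 ≤ rc t) (hrs : ∀ t, rc t ≤ sc t)
    (a : ι → ℕ → ℝ) (hann : ∀ t u, 0 ≤ a t u) (har : ∀ t, 0 < a t (rc t))
    (ρ : ι → ℝ) (hρ : ∀ t, 0 < ρ t) (hρ1 : ∑ t, ρ t = 1)
    (intL : ℝ) (hintL : 0 < intL)
    (rmin : ℕ) (hrle : ∀ t, rmin ≤ rc t) (hrex : ∃ t, rc t = rmin)
    (ε₀ : ℝ) (hε₀ : 0 < ε₀)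
    (z₀ y₀ β : ℝ → ℝ)
    (hpos : ∀ α ∈ Set.Ioo 0 ε₀, 0 < z₀ α ∧ 0 < y₀ α ∧ 0 < β α)
    (hE1 : ∀ α ∈ Set.Ioo 0 ε₀,
      z₀ α * ((intden ρ sc / intL) *
        ∑ t, nodefrac ρ sc t * deriv (AIcc rc sc a t) (z₀ α) / AIcc rc sc a t (z₀ α)) = β α)
    (hE4 : ∀ α ∈ Set.Ioo 0 ε₀,
      (β α * intL) * (1 + y₀ α * z₀ α) = y₀ α * z₀ α)
    (hβ0 : Filter.Tendsto β (nhdsWithin 0 (Set.Ioi 0)) (𝓝 0)) :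
    Filter.Tendsto
      (fun α => y₀ α /
        (Cdef rc sc a ρ rmin ^ ((1 : ℝ) / rmin) *
          (β α * intL) ^ (((rmin : ℝ) - 1) / rmin)))
      (nhdsWithin 0 (Set.Ioi 0)) (𝓝 1) :=
  stmt_17_general rc sc h2r hrs a hann har ρ hρ intL hintL rmin hrle hrex ε₀ hε₀ z₀ y₀ β hpos hE1
    hE4 hβ0
end
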